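/- arXiv:1211.0221 — 3 statements merged into one kernel-verified Lean document; each statement's English description precedes it below -/
import Mathlib

section
/- Let k ≥ 0 and c ∈ ℝ. For each R ≥ 0, the function Ψ_R(u) = ln(1/u) − √k R u is a strictly decreasing bijection from (0,∞) onto ℝ, so U(R) := Ψ_R^{-1}(c) is well defined. Moreover, the function U : [0,∞) → (0,∞) is non-increasing and satisfies U(R) ≥ 1/(√k R + e^c) for every R ≥ 0. -/
open Real Set

/-- The function `Ψ_R(u) = ln(1/u) − √k · R · u` from Section 4 of the paper. -/
noncomputable def paperPsi (k R u : ℝ) : ℝ := Real.log (1 / u) - Real.sqrt k * R * u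

lemma paperPsi_eq (k R u : ℝ) :
    paperPsi k R u = -Real.log u - Real.sqrt k * R * u := by
  unfold paperPsi; rw [one_div, Real.log_inv]

lemma paperPsi_anti (k R : ℝ) (hk : 0 ≤ k) (hR : 0 ≤ R) :
    StrictAntiOn (paperPsi k R) (Set.Ioi 0) := by
  intro x hx y hy hxy
  have ha : 0 ≤ Real.sqrt k * R := mul_nonneg (Real.sqrt_nonneg k) hR
  simp only [paperPsi_eq]
  have hlog : Real.log x < Real.log y := Real.log_lt_log hx hxy
  have hmul : Real.sqrt k * R * x ≤ Real.sqrt k * R * y :=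
    mul_le_mul_of_nonneg_left hxy.le ha
  linarith

lemma paperPsi_at_inv (k R t : ℝ) (hk : 0 ≤ k) (hR : 0 ≤ R) :
    t ≤ paperPsi k R (Real.sqrt k * R + Real.exp t)⁻¹ := by
  have ha : 0 ≤ Real.sqrt k * R := mul_nonneg (Real.sqrt_nonneg k) hR
  have hs : 0 < Real.sqrt k * R + Real.exp t := by positivity
  rw [paperPsi_eq, Real.log_inv, neg_neg]
  have h := Real.log_le_sub_one_of_pos
    (show 0 < Real.exp t / (Real.sqrt k * R + Real.exp t) by positivity)
  rw [Real.log_div (Real.exp_ne_zero t) hs.ne', Real.log_exp] at h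
  have heq : Real.exp t / (Real.sqrt k * R + Real.exp t) - 1
      = -(Real.sqrt k * R * (Real.sqrt k * R + Real.exp t)⁻¹) := by
    field_simp
    ring
  linarith

lemma paperPsi_cont (k R : ℝ) : ContinuousOn (paperPsi k R) (Set.Ioi 0) := by
  have : ContinuousOn (fun u : ℝ => -Real.log u - Real.sqrt k * R * u) (Set.Ioi 0) := by
    apply ContinuousOn.sub
    · exact (Real.continuousOn_log.mono (fun x hx => ne_of_gt hx)).neg
    · exact (continuous_const.mul continuous_id).continuousOn
  exact this.congr (fun u _ => paperPsi_eq k R u)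

lemma paperPsi_surj (k R t : ℝ) (hk : 0 ≤ k) (hR : 0 ≤ R) :
    ∃ u ∈ Set.Ioi (0 : ℝ), paperPsi k R u = t := by
  have ha : 0 ≤ Real.sqrt k * R := mul_nonneg (Real.sqrt_nonneg k) hR
  set u₀ : ℝ := (Real.sqrt k * R + Real.exp t)⁻¹ with hu₀_def
  set u₁ : ℝ := Real.exp (-t) with hu₁_def
  have hu₀ : 0 < u₀ := by positivity
  have hu₁ : 0 < u₁ := Real.exp_pos _
  have hsub : Set.uIcc u₀ u₁ ⊆ Set.Ioi 0 := fun x hx =>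
    lt_of_lt_of_le (lt_min hu₀ hu₁) hx.1
  have hΨ₀ : t ≤ paperPsi k R u₀ := paperPsi_at_inv k R t hk hR
  have hΨ₁ : paperPsi k R u₁ ≤ t := by
    rw [paperPsi_eq, hu₁_def, Real.log_exp]
    have : 0 ≤ Real.sqrt k * R * Real.exp (-t) := mul_nonneg ha (Real.exp_pos _).le
    linarith
  have hmem : t ∈ Set.uIcc (paperPsi k R u₀) (paperPsi k R u₁) :=
    Set.mem_uIcc.mpr (Or.inr ⟨hΨ₁, hΨ₀⟩)
  obtain ⟨u, humem, hueq⟩ :=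
    intermediate_value_uIcc ((paperPsi_cont k R).mono hsub) hmem
  exact ⟨u, hsub humem, hueq⟩

theorem stmt_5 (k c : ℝ) (hk : 0 ≤ k) :
    (∀ R : ℝ, 0 ≤ R →
      StrictAntiOn (paperPsi k R) (Set.Ioi 0) ∧
      Set.BijOn (paperPsi k R) (Set.Ioi 0) Set.univ) ∧
    (∀ R : ℝ, 0 ≤ R → ∃! u : ℝ, u ∈ Set.Ioi (0 : ℝ) ∧ paperPsi k R u = c) ∧
    ∀ U : ℝ → ℝ,
      (∀ R : ℝ, 0 ≤ R → 0 < U R ∧ paperPsi k R (U R) = c) →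
      AntitoneOn U (Set.Ici 0) ∧
      ∀ R : ℝ, 0 ≤ R → U R ≥ 1 / (Real.sqrt k * R + Real.exp c) := by
  refine ⟨fun R hR => ⟨paperPsi_anti k R hk hR, ?_⟩, fun R hR => ?_, fun U hU => ⟨?_, ?_⟩⟩
  · refine ⟨fun x _ => Set.mem_univ _, (paperPsi_anti k R hk hR).injOn, fun t _ => ?_⟩
    obtain ⟨u, hu, hequ⟩ := paperPsi_surj k R t hk hR
    exact ⟨u, hu, hequ⟩
  · obtain ⟨u, hu, hequ⟩ := paperPsi_surj k R c hk hR
    exact ⟨u, ⟨hu, hequ⟩, fun v ⟨hv, heqv⟩ =>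
      (paperPsi_anti k R hk hR).injOn hv hu (heqv.trans hequ.symm)⟩
  · -- antitone
    intro R₁ h₁ R₂ h₂ h12
    by_contra hcon
    push_neg at hcon
    have hU₁ := hU R₁ h₁
    have hU₂ := hU R₂ h₂
    have hlt : paperPsi k R₁ (U R₂) < paperPsi k R₁ (U R₁) :=
      paperPsi_anti k R₁ hk h₁ hU₁.1 hU₂.1 hcon
    have hle : paperPsi k R₂ (U R₂) ≤ paperPsi k R₁ (U R₂) := by
      rw [paperPsi_eq, paperPsi_eq]
      have : Real.sqrt k * R₁ * U R₂ ≤ Real.sqrt k * R₂ * U R₂ := by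
        apply mul_le_mul_of_nonneg_right _ hU₂.1.le
        exact mul_le_mul_of_nonneg_left h12 (Real.sqrt_nonneg k)
      linarith
    rw [hU₁.2, hU₂.2] at *
    linarith
  · -- lower bound
    intro R hR
    have hU' := hU R hR
    set u₀ : ℝ := (Real.sqrt k * R + Real.exp c)⁻¹ with hu₀_def
    have hu₀ : 0 < u₀ := by positivity
    rw [ge_iff_le, one_div]
    by_contra hcon
    push_neg at hcon
    have hlt : paperPsi k R u₀ < paperPsi k R (U R) :=
      paperPsi_anti k R hk hR hU'.1 hu₀ hcon
    have := paperPsi_at_inv k R c hk hR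
    rw [hU'.2] at hlt
    linarith
end

section
/- Let k ≥ 0, c ∈ ℝ, and let U(R) = Ψ_R^{-1}(c) be as above. Define A(R) = min(U(R)², 1) for R ≥ 0. Then A(R) ≤ 1 for all R ≥ 0, and there exists a constant C₁ > 0, depending only on k and c, such that A(R) ≥ C₁/(1 + k R²) for all R ≥ 0. -/
open Real Set

theorem stmt_6 (k c : ℝ) (hk : 0 ≤ k) (U : ℝ → ℝ)
    (hU : ∀ R : ℝ, 0 ≤ R → 0 < U R ∧ paperPsi k R (U R) = c) :
    (∀ R : ℝ, 0 ≤ R → min ((U R) ^ 2) 1 ≤ 1) ∧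
    ∃ C₁ : ℝ, 0 < C₁ ∧
      ∀ R : ℝ, 0 ≤ R → min ((U R) ^ 2) 1 ≥ C₁ / (1 + k * R ^ 2) := by
  constructor
  · intro R _
    exact min_le_right _ _
  · set c' : ℝ := min 1 (Real.exp (-(c + 1))) with hc'
    have hc'pos : 0 < c' := lt_min one_pos (Real.exp_pos _)
    have hc'le1 : c' ≤ 1 := min_le_left _ _
    refine ⟨c' ^ 2 / 2, by positivity, ?_⟩
    intro R hR
    set s : ℝ := Real.sqrt k * R with hs
    have hs0 : 0 ≤ s := mul_nonneg (Real.sqrt_nonneg k) hR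
    have hden : (0 : ℝ) < 1 + s := by linarith
    set v : ℝ := c' / (1 + s) with hv
    have hvpos : 0 < v := div_pos hc'pos hden
    obtain ⟨hUpos, hUeq⟩ := hU R hR
    have hPsiV : c ≤ paperPsi k R v := by
      have h1 : Real.log (1 / v) = Real.log (1 + s) - Real.log c' := by
        rw [one_div, Real.log_inv, hv, Real.log_div (ne_of_gt hc'pos) (ne_of_gt hden)]
        ring
      have h2 : Real.log c' ≤ -(c + 1) := by
        calc Real.log c' ≤ Real.log (Real.exp (-(c + 1))) :=
              Real.log_le_log hc'pos (min_le_right _ _)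
          _ = -(c + 1) := Real.log_exp _
      have h3 : s * v ≤ c' := by
        rw [hv, mul_comm, div_mul_eq_mul_div, div_le_iff₀ hden]
        nlinarith [hc'pos.le]
      have h4 : 0 ≤ Real.log (1 + s) := Real.log_nonneg (by linarith)
      have hdef : paperPsi k R v = Real.log (1 / v) - s * v := rfl
      rw [hdef, h1]
      linarith
    have hUv : v ≤ U R := by
      by_contra h
      push_neg at h
      have hlog : Real.log (1 / v) < Real.log (1 / U R) := by
        exact Real.log_lt_log (by positivity) (one_div_lt_one_div_of_lt hUpos h)
      have hmul : s * U R ≤ s * v := mul_le_mul_of_nonneg_left h.le hs0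
      have hlt : paperPsi k R v < paperPsi k R (U R) := by
        unfold paperPsi
        have : Real.sqrt k * R = s := rfl
        rw [this]
        linarith
      linarith [hPsiV, hlt, hUeq.le, hUeq.ge]
    have hsq : v ^ 2 ≤ (U R) ^ 2 := by nlinarith [hvpos.le]
    have hks : s ^ 2 = k * R ^ 2 := by
      rw [hs, mul_pow, Real.sq_sqrt hk]
    have hkR : 0 ≤ k * R ^ 2 := mul_nonneg hk (sq_nonneg R)
    have hdenom : (0 : ℝ) < 1 + k * R ^ 2 := by linarith
    have hv2 : c' ^ 2 / 2 / (1 + k * R ^ 2) ≤ v ^ 2 := by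
      rw [hv, div_pow, div_le_div_iff₀ hdenom (by positivity)]
      nlinarith [sq_nonneg (1 - s), sq_nonneg c']
    rw [ge_iff_le]
    rcases le_or_gt ((U R) ^ 2) 1 with h | h
    · rw [min_eq_left h]
      linarith
    · rw [min_eq_right h.le]
      calc c' ^ 2 / 2 / (1 + k * R ^ 2) ≤ c' ^ 2 / 2 :=
            div_le_self (by positivity) (by linarith)
        _ ≤ 1 := by nlinarith
end

section
/- Let R > 0, C₃ ≥ 1 and C₄ ≥ 0. The collection of isometry classes of compact metric spaces X with diameter at most R which admit a Borel probability measure μ satisfying μ(B(x, 2r)) ≤ C₃ exp(C₄ r²) μ(B(x, r)) for every x ∈ X and r > 0 is totally bounded (hence relatively compact) with respect to the Gromov–Hausdorff distance. -/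
open Real MeasureTheory GromovHausdorff Metric ENNReal

private lemma key_cover {X : Type} [MetricSpace X] [CompactSpace X] [Nonempty X]
    [m : MeasurableSpace X] [BorelSpace X] (μ : Measure X) [IsProbabilityMeasure μ]
    {R C₃ C₄ : ℝ} (hR : 0 < R) (hC₃ : 1 ≤ C₃) (hC₄ : 0 ≤ C₄)
    (hdiam : Metric.diam (Set.univ : Set X) ≤ R)
    (hdoub : ∀ (x : X) (r : ℝ), 0 < r →
      μ (ball x (2 * r)) ≤ ENNReal.ofReal (C₃ * Real.exp (C₄ * r ^ 2)) * μ (ball x r))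
    (n : ℕ) :
    ∃ s : Set X,
      Cardinal.mk s ≤ (Nat.ceil ((C₃ * Real.exp (C₄ * R ^ 2)) ^ (n + 2)) : ℕ) ∧
      Set.univ ⊆ ⋃ x ∈ s, ball x (R / 2 ^ n) := by
  set D : ℝ := C₃ * Real.exp (C₄ * R ^ 2) with hDdef
  have hD : 1 ≤ D := by
    have h1 : (1:ℝ) ≤ Real.exp (C₄ * R ^ 2) := Real.one_le_exp (by positivity)
    nlinarith
  have hD0 : 0 ≤ D := by linarith
  set ε2 : ℝ := R / 2 ^ (n + 1) with hε2def
  have hε2 : 0 < ε2 := by positivity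
  -- lower bound on measures of small balls
  have hlow : ∀ x : X, (1 : ℝ≥0∞) ≤ ENNReal.ofReal D ^ (n + 2) * μ (ball x ε2) := by
    intro x
    have claim : ∀ k, k ≤ n + 2 →
        μ (ball x (2 ^ k * ε2)) ≤ ENNReal.ofReal D ^ k * μ (ball x ε2) := by
      intro k
      induction k with
      | zero => intro _; simp
      | succ k ih =>
        intro hk
        have hk' : k ≤ n + 2 := by omega
        have hr : (0:ℝ) < 2 ^ k * ε2 := by positivity
        have hrR : 2 ^ k * ε2 ≤ R := by
          have h2 : (2:ℝ) ^ k ≤ 2 ^ (n + 1) := by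
            apply pow_le_pow_right₀ (by norm_num)
            omega
          calc (2:ℝ) ^ k * ε2 ≤ 2 ^ (n + 1) * ε2 := by
                apply mul_le_mul_of_nonneg_right h2 hε2.le
            _ = R := by
                rw [hε2def]; field_simp
        have hDle : ENNReal.ofReal (C₃ * Real.exp (C₄ * (2 ^ k * ε2) ^ 2))
            ≤ ENNReal.ofReal D := by
          apply ENNReal.ofReal_le_ofReal
          apply mul_le_mul_of_nonneg_left _ (by linarith)
          apply Real.exp_le_exp.2
          apply mul_le_mul_of_nonneg_left _ hC₄
          exact pow_le_pow_left₀ hr.le hrR 2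
        calc μ (ball x (2 ^ (k + 1) * ε2)) = μ (ball x (2 * (2 ^ k * ε2))) := by
              ring_nf
          _ ≤ ENNReal.ofReal (C₃ * Real.exp (C₄ * (2 ^ k * ε2) ^ 2)) *
                μ (ball x (2 ^ k * ε2)) := hdoub x _ hr
          _ ≤ ENNReal.ofReal D * (ENNReal.ofReal D ^ k * μ (ball x ε2)) := by
              exact mul_le_mul hDle (ih hk') zero_le zero_le
          _ = ENNReal.ofReal D ^ (k + 1) * μ (ball x ε2) := by ring
    have hball : ball x (2 ^ (n + 2) * ε2) = Set.univ := by
      apply Set.eq_univ_of_forall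
      intro y
      have hb : Bornology.IsBounded (Set.univ : Set X) := isBounded_of_compactSpace
      have hd : dist y x ≤ R :=
        (Metric.dist_le_diam_of_mem hb (Set.mem_univ _) (Set.mem_univ _)).trans hdiam
      have : (2:ℝ) ^ (n + 2) * ε2 = 2 * R := by
        rw [hε2def]; field_simp; ring
      rw [Metric.mem_ball, this]
      linarith
    have := claim (n + 2) le_rfl
    rw [hball, measure_univ] at this
    exact this
  -- Zorn: maximal separated set
  set S : Set (Set X) := {s | s.Pairwise fun a b => 2 * ε2 ≤ dist a b} with hSdef
  obtain ⟨M, hMmax⟩ : ∃ M, Maximal (· ∈ S) M := by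
    apply zorn_subset
    intro c hcS hchain
    refine ⟨⋃₀ c, ?_, fun s hs => Set.subset_sUnion_of_mem hs⟩
    intro a ha b hb hab
    obtain ⟨s₁, hs₁, ha₁⟩ := ha
    obtain ⟨s₂, hs₂, hb₂⟩ := hb
    rcases hchain.total hs₁ hs₂ with h | h
    · exact hcS hs₂ (h ha₁) hb₂ hab
    · exact hcS hs₁ ha₁ (h hb₂) hab
  have hMsep : M.Pairwise fun a b => 2 * ε2 ≤ dist a b := hMmax.1
  -- finite subset bound
  have hbound : ∀ t : Finset X, ↑t ⊆ M → (t.card : ℝ) ≤ D ^ (n + 2) := by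
    intro t ht
    have hdisj : (↑t : Set X).PairwiseDisjoint (fun x => ball x ε2) := by
      intro a ha b hb hab
      have := hMsep (ht ha) (ht hb) hab
      exact Metric.ball_disjoint_ball (by linarith)
    have hmeas : ∀ x ∈ t, MeasurableSet (ball x ε2) := fun x _ =>
      measurableSet_ball
    have hsum : ∑ x ∈ t, μ (ball x ε2) ≤ 1 := by
      rw [← measure_biUnion_finset hdisj hmeas]
      exact (measure_mono (Set.subset_univ _)).trans_eq measure_univ
    have hcard : (t.card : ℝ≥0∞) ≤ ENNReal.ofReal D ^ (n + 2) := by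
      calc (t.card : ℝ≥0∞) = ∑ _x ∈ t, (1 : ℝ≥0∞) := by simp
        _ ≤ ∑ x ∈ t, ENNReal.ofReal D ^ (n + 2) * μ (ball x ε2) :=
            Finset.sum_le_sum fun x _ => hlow x
        _ = ENNReal.ofReal D ^ (n + 2) * ∑ x ∈ t, μ (ball x ε2) := by
            rw [Finset.mul_sum]
        _ ≤ ENNReal.ofReal D ^ (n + 2) * 1 := by
            exact mul_le_mul_right hsum _
        _ = ENNReal.ofReal D ^ (n + 2) := mul_one _
    have : (t.card : ℝ≥0∞) ≤ ENNReal.ofReal (D ^ (n + 2)) := by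
      rwa [ENNReal.ofReal_pow hD0]
    rw [show ((t.card : ℝ≥0∞)) = ENNReal.ofReal (t.card : ℝ) by
      simp] at this
    exact (ENNReal.ofReal_le_ofReal_iff (by positivity)).mp this
  set K : ℕ := Nat.ceil (D ^ (n + 2)) with hKdef
  have hboundK : ∀ t : Finset X, ↑t ⊆ M → t.card ≤ K := by
    intro t ht
    have h := (hbound t ht).trans (Nat.le_ceil _)
    exact_mod_cast h
  have hMfin : M.Finite := by
    by_contra hinf
    obtain ⟨t, htM, htfin, htcard⟩ :=
      Set.Infinite.exists_subset_ncard_eq hinf (K + 1)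
    have h2 := hboundK htfin.toFinset (by simpa using htM)
    rw [Set.ncard_eq_toFinset_card t htfin] at htcard
    omega
  refine ⟨M, ?_, ?_⟩
  · have h1 : Cardinal.mk M = (hMfin.toFinset.card : Cardinal) := by
      rw [← Cardinal.mk_coe_finset]
      exact Cardinal.mk_congr (Equiv.setCongr hMfin.coe_toFinset.symm)
    rw [h1]
    exact_mod_cast hboundK hMfin.toFinset (by simp)
  · intro y _
    by_contra hy
    simp only [Set.mem_iUnion, Metric.mem_ball, not_exists] at hy
    have hεeq : R / 2 ^ n = 2 * ε2 := by rw [hε2def]; field_simp; ring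
    have hsep : ∀ x ∈ M, 2 * ε2 ≤ dist y x := by
      intro x hx
      have := hy x hx
      rw [hεeq] at this
      linarith [not_lt.mp this]
    have hyM : y ∉ M := by
      intro hyM
      have := hsep y hyM
      simp at this
      linarith
    have hins : insert y M ∈ S := by
      apply Set.Pairwise.insert hMsep
      intro x hx hxy
      constructor
      · exact dist_comm y x ▸ hsep x hx
      · rw [dist_comm]; exact dist_comm y x ▸ hsep x hx
    have := hMmax.2 hins (Set.subset_insert y M)
    exact hyM (this (Set.mem_insert y M))

theorem stmt_13 (R C₃ C₄ : ℝ) (hR : 0 < R) (hC₃ : 1 ≤ C₃) (hC₄ : 0 ≤ C₄) :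
    TotallyBounded
      { p : GHSpace |
        ∃ (X : Type) (_ : MetricSpace X) (_ : CompactSpace X) (_ : Nonempty X),
          Metric.diam (Set.univ : Set X) ≤ R ∧
          (∃ (m : MeasurableSpace X) (_ : @BorelSpace X _ m) (μ : @Measure X m),
            @IsProbabilityMeasure X m μ ∧
            ∀ (x : X) (r : ℝ), 0 < r →
              μ (Metric.ball x (2 * r))
                ≤ ENNReal.ofReal (C₃ * Real.exp (C₄ * r ^ 2)) * μ (Metric.ball x r)) ∧
          toGHSpace X = p } := by
  apply GromovHausdorff.totallyBounded (C := R) (u := fun n => R / 2 ^ n)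
    (K := fun n => Nat.ceil ((C₃ * Real.exp (C₄ * R ^ 2)) ^ (n + 2)))
  · have h := tendsto_pow_atTop_nhds_zero_of_lt_one
      (by norm_num : (0:ℝ) ≤ 1/2) (by norm_num : (1:ℝ)/2 < 1)
    have := h.const_mul R
    simpa [div_pow, mul_one_div, div_eq_mul_inv] using this
  · rintro p ⟨X, _, _, _, hdiam, -, hp⟩
    have hiso : Nonempty (X ≃ᵢ p.Rep) := by
      rw [← toGHSpace_eq_toGHSpace_iff_isometryEquiv, hp, p.toGHSpace_rep]
    obtain ⟨e⟩ := hiso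
    have : Metric.diam (Set.univ : Set p.Rep) = Metric.diam (Set.univ : Set X) := by
      rw [← e.isometry.diam_image Set.univ, Set.image_univ, e.range_eq_univ]
    rw [this]; exact hdiam
  · rintro p ⟨X, _, _, _, hdiam, ⟨m, hbor, μ, hprob, hdoub⟩, hp⟩ n
    have hiso : Nonempty (X ≃ᵢ p.Rep) := by
      rw [← toGHSpace_eq_toGHSpace_iff_isometryEquiv, hp, p.toGHSpace_rep]
    obtain ⟨e⟩ := hiso
    letI := m
    haveI := hbor
    haveI := hprob
    obtain ⟨s, hcard, hcov⟩ := key_cover μ hR hC₃ hC₄ hdiam hdoub n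
    refine ⟨e '' s, ?_, ?_⟩
    · rw [Cardinal.mk_image_eq e.injective]
      exact hcard
    · intro y _
      obtain ⟨x, hxs, hxy⟩ := by
        simpa only [Set.mem_iUnion, Metric.mem_ball] using hcov (Set.mem_univ (e.symm y))
      refine Set.mem_iUnion₂.2 ⟨e x, Set.mem_image_of_mem e hxs, ?_⟩
      rw [Metric.mem_ball]
      have : dist y (e x) = dist (e.symm y) x := by
        rw [← e.symm.dist_eq y (e x), e.symm_apply_apply]
      rw [this]; exact hxy
end
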